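/- Let ε₀ > 0, r₁ > 0, b > 0 and let φ ∈ [−π/2, π/2] be a differentiable function on S¹ satisfying ∂ₛ(cos φ) = sin φ·(κ − κ̊·cos φ) pointwise, where κ ≥ ε₀ and 0 < κ̊ ≤ b·coth(b·r₁/2) are continuous functions on S¹. Then cos φ ≥ min{1, ε₀/(b·coth(b·r₁/2))} > 0 everywhere on S¹. -/
import Mathlib

/-- The hyperbolic cotangent. -/
noncomputable def coth (x : ℝ) : ℝ := Real.cosh x / Real.sinh x

/-- Lower bound for cos φ, the cosine of the angle between the radial direction
and the outer normal: if ∂ₛ(cos φ) = sin φ·(κ − kcirc·cos φ) with κ ≥ ε₀ and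
0 < kcirc ≤ b·coth(b·r₁/2), then cos φ ≥ min{1, ε₀/(b·coth(b·r₁/2))} > 0. -/
theorem cos_angle_lower_bound (ε₀ r₁ b : ℝ) (hε : 0 < ε₀) (hr : 0 < r₁)
    (hb : 0 < b) (φ κ kcirc : ℝ → ℝ)
    (hφper : Function.Periodic φ (2 * Real.pi)) (hφc : Continuous φ)
    (hφrange : ∀ s, φ s ∈ Set.Icc (-(Real.pi / 2)) (Real.pi / 2))
    (hκc : Continuous κ) (hκ : ∀ s, ε₀ ≤ κ s)
    (hkcircc : Continuous kcirc)
    (hkcirc : ∀ s, 0 < kcirc s ∧ kcirc s ≤ b * coth (b * r₁ / 2))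
    (hderiv : ∀ s, HasDerivAt (fun u => Real.cos (φ u))
      (Real.sin (φ s) * (κ s - kcirc s * Real.cos (φ s))) s) :
    (∀ s, min 1 (ε₀ / (b * coth (b * r₁ / 2))) ≤ Real.cos (φ s)) ∧
    0 < min 1 (ε₀ / (b * coth (b * r₁ / 2))) := by
  set B : ℝ := b * coth (b * r₁ / 2) with hB
  have hBpos : 0 < B := by
    have h1 : 0 < b * r₁ / 2 := by positivity
    have hs : 0 < Real.sinh (b * r₁ / 2) := Real.sinh_pos_iff.2 h1
    have hc : 0 < Real.cosh (b * r₁ / 2) := Real.cosh_pos _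
    exact mul_pos hb (div_pos hc hs)
  have hminpos : 0 < min 1 (ε₀ / B) := lt_min one_pos (div_pos hε hBpos)
  refine ⟨?_, hminpos⟩
  set f : ℝ → ℝ := fun u => Real.cos (φ u) with hf
  have hfper : Function.Periodic f (2 * Real.pi) := fun x => by
    simp [hf, hφper x]
  have hfc : Continuous f := Real.continuous_cos.comp hφc
  -- minimum on [0, 2π]
  obtain ⟨s₀, hs₀mem, hs₀min⟩ :=
    (isCompact_Icc (a := (0:ℝ)) (b := 2 * Real.pi)).exists_isMinOn
      (Set.nonempty_Icc.2 (by positivity)) hfc.continuousOn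
  -- s₀ is a global minimum
  have hglobal : ∀ s, f s₀ ≤ f s := by
    intro s
    obtain ⟨y, hy, hxy⟩ := hfper.exists_mem_Ico₀ Real.two_pi_pos s
    rw [hxy]
    exact hs₀min (Set.Ico_subset_Icc_self hy)
  have hloc : IsLocalMin f s₀ := Filter.Eventually.of_forall hglobal
  have hzero : Real.sin (φ s₀) * (κ s₀ - kcirc s₀ * Real.cos (φ s₀)) = 0 :=
    hloc.hasDerivAt_eq_zero (hderiv s₀)
  have key : min 1 (ε₀ / B) ≤ f s₀ := by
    rcases mul_eq_zero.1 hzero with h | h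
    · -- sin φ s₀ = 0 → φ s₀ = 0 → cos = 1
      have hmem := hφrange s₀
      have hφ0 : φ s₀ = 0 := by
        rw [Real.sin_eq_zero_iff_of_lt_of_lt ?_ ?_] at h
        · exact h
        · linarith [hmem.1, Real.pi_pos]
        · linarith [hmem.2, Real.pi_pos]
      have : f s₀ = 1 := by simp [hf, hφ0]
      rw [this]; exact min_le_left _ _
    · have hk := hkcirc s₀
      have hcos : Real.cos (φ s₀) = κ s₀ / kcirc s₀ := by
        rw [eq_div_iff hk.1.ne']
        linarith
      have hdiv : ε₀ / B ≤ κ s₀ / kcirc s₀ :=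
        div_le_div₀ (le_trans hε.le (hκ s₀)) (hκ s₀) hk.1 hk.2
      have : ε₀ / B ≤ f s₀ := by rw [hf]; simpa [hcos] using hdiv
      exact le_trans (min_le_right _ _) this
  exact fun s => le_trans key (hglobal s)
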